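/- arXiv:0907.2202 — 2 statements merged into one kernel-verified Lean document; each statement's English description precedes it below -/
import Mathlib

section
/- Let d₁,d₂,d₃ > 0, I₁ = d₂+d₃, I₂ = d₁+d₃, I₃ = d₁+d₂, and α₁,α₂,α₃ ∈ ℝ. Fix β ∈ (0, 1/2) and Δt > 0 with Δt(|α₁|/I₁ + |α₂|/I₂ + |α₃|/I₃) ≤ 2√((β−β²)/3) − β. If e₁²+e₂²+e₃² < β and e₀ = √(1−e₁²−e₂²−e₃²), then the iterate defined by e₁* = (Δt·α₁ − 2(d₂−d₃)e₂e₃)/(2(d₂+d₃)e₀), e₂* = (Δt·α₂ − 2(d₃−d₁)e₁e₃)/(2(d₁+d₃)e₀), e₃* = (Δt·α₃ − 2(d₁−d₂)e₁e₂)/(2(d₁+d₂)e₀) satisfies (e₁*)²+(e₂*)²+(e₃*)² < β. -/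
/-!
Multiplied by `e₀ = √(1 - S)`, where `S = e₁² + e₂² + e₃²`, the `i`-th component of the iterate is
bounded by `aᵢ + |eⱼ eₖ|` with `aᵢ = Δt |αᵢ| / (2 Iᵢ)`, since `|dⱼ - dₖ| ≤ Iᵢ`. The triangle inequality
in `ℝ³` together with `∑ (eⱼ eₖ)² ≤ S² / 3` bounds the norm of `e₀ e*` by `∑ aᵢ + S / √3`, and the CFL
condition bounds this by `C / 2 + S / √3`, `C` being its right-hand side. As `S < β`, this is less than
`C / 2 + β / √3`, which for `β ≤ 1 / 2` is at most `√β √(1 - β) < √β e₀`.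
-/

open Finset

theorem sum_sq_le_of_abs_le {ι : Type*} (s : Finset ι) (x a b : ι → ℝ) (c : ℝ)
    (hx : ∀ i ∈ s, |x i| ≤ a i + b i) (ha : ∀ i ∈ s, 0 ≤ a i) (hc : 0 ≤ c)
    (hb : ∑ i ∈ s, b i ^ 2 ≤ c ^ 2) :
    ∑ i ∈ s, x i ^ 2 ≤ (∑ i ∈ s, a i + c) ^ 2 := by
  have hbc : ∀ i ∈ s, b i ≤ c := fun i hi =>
    (abs_le_of_sq_le_sq' ((single_le_sum (fun j _ => sq_nonneg (b j)) hi).trans hb) hc).2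
  calc ∑ i ∈ s, x i ^ 2 ≤ ∑ i ∈ s, (a i ^ 2 + 2 * (a i * b i) + b i ^ 2) := by
        refine sum_le_sum fun i hi => ?_
        nlinarith [sq_abs (x i), abs_nonneg (x i), hx i hi]
    _ ≤ ∑ i ∈ s, a i ^ 2 + 2 * ((∑ i ∈ s, a i) * c) + c ^ 2 := by
        rw [sum_add_distrib, sum_add_distrib, ← mul_sum, sum_mul]
        gcongr with i hi
        exacts [ha i hi, hbc i hi]
    _ ≤ (∑ i ∈ s, a i + c) ^ 2 := by
        nlinarith [sum_sq_le_sq_sum_of_nonneg ha]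

theorem abs_mul_le_of_eq_div {Δt α d I e0 p q x : ℝ} (hΔt : 0 ≤ Δt) (hI : 0 < I)
    (hd : |d| ≤ I) (he0 : 0 < e0) (hx : x = (Δt * α - 2 * d * p * q) / (2 * I * e0)) :
    |e0 * x| ≤ Δt * |α| / (2 * I) + |p * q| := by
  have hnum : |Δt * α - 2 * d * (p * q)| ≤ Δt * |α| + 2 * I * |p * q| :=
    calc |Δt * α - 2 * d * (p * q)| ≤ |Δt * α| + |2 * d * (p * q)| := abs_sub _ _
      _ = Δt * |α| + 2 * |d| * |p * q| := by simp [abs_mul, abs_of_nonneg hΔt]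
      _ ≤ Δt * |α| + 2 * I * |p * q| := by gcongr
  have hx' : e0 * x = (Δt * α - 2 * d * (p * q)) / (2 * I) := by
    rw [hx]; field_simp
  rw [hx', abs_div, abs_of_pos (by positivity : (0:ℝ) < 2 * I)]
  calc |Δt * α - 2 * d * (p * q)| / (2 * I) ≤ (Δt * |α| + 2 * I * |p * q|) / (2 * I) := by
        gcongr
    _ = Δt * |α| / (2 * I) + |p * q| := by field_simp

theorem sq_mul_add_sq_mul_add_sq_mul_le (x y z : ℝ) :
    (y * z) ^ 2 + (x * z) ^ 2 + (x * y) ^ 2 ≤ (x ^ 2 + y ^ 2 + z ^ 2) ^ 2 / 3 := by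
  nlinarith [sq_nonneg (x ^ 2 - y ^ 2), sq_nonneg (x ^ 2 - z ^ 2), sq_nonneg (y ^ 2 - z ^ 2)]

theorem cfl_half_add_div_sqrt_three_lt {β S : ℝ} (hβ0 : 0 ≤ β) (hβ : β ≤ 1 / 2) (hS : S < β) :
    (2 * √((β - β ^ 2) / 3) - β) / 2 + S / √3 < √β * √(1 - S) := by
  have ht43 : 4 / 3 ≤ √3 := Real.le_sqrt_of_sq_le (by norm_num)
  have ht2 : √3 ≤ 2 := Real.sqrt_le_iff.2 ⟨by norm_num, by norm_num⟩
  have hroot : √((β - β ^ 2) / 3) = √β * √(1 - β) / √3 := by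
    rw [← Real.sqrt_mul hβ0, Real.sqrt_div' _ (by norm_num : (0:ℝ) ≤ 3)]; ring_nf
  have hu : √β ^ 2 = β := Real.sq_sqrt hβ0
  have huv : √β ^ 2 ≤ √β * √(1 - β) := by
    rw [sq]; gcongr; linarith
  have key : 2 * √β * √(1 - β) - β * √3 + 2 * S < 2 * √β * √(1 - S) * √3 :=
    calc 2 * √β * √(1 - β) - β * √3 + 2 * S
        < 2 * √β * √(1 - β) + √β ^ 2 * (2 - √3) := by rw [hu]; linarith
      _ ≤ √β * √(1 - β) * (4 - √3) := by nlinarith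
      _ ≤ 2 * √β * √(1 - β) * √3 := by
        nlinarith [mul_nonneg (Real.sqrt_nonneg β) (Real.sqrt_nonneg (1 - β))]
      _ ≤ 2 * √β * √(1 - S) * √3 := by gcongr
  rw [hroot]
  field_simp
  linarith

theorem stmt_9_general (d1 d2 d3 : ℝ) (hd1 : 0 < d1) (hd2 : 0 < d2) (hd3 : 0 < d3)
    (I1 I2 I3 : ℝ) (hI1 : I1 = d2 + d3) (hI2 : I2 = d1 + d3) (hI3 : I3 = d1 + d2)
    (α1 α2 α3 : ℝ) (β Δt : ℝ) (hβ : β < 1/2) (hΔt : 0 < Δt)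
    (hCFL : Δt * (|α1| / I1 + |α2| / I2 + |α3| / I3) ≤ 2 * Real.sqrt ((β - β^2)/3) - β)
    (e1 e2 e3 e0 : ℝ) (he : e1^2 + e2^2 + e3^2 < β)
    (he0 : e0 = Real.sqrt (1 - e1^2 - e2^2 - e3^2))
    (e1' e2' e3' : ℝ)
    (h1 : e1' = (Δt * α1 - 2*(d2 - d3)*e2*e3) / (2*(d2 + d3)*e0))
    (h2 : e2' = (Δt * α2 - 2*(d3 - d1)*e1*e3) / (2*(d1 + d3)*e0))
    (h3 : e3' = (Δt * α3 - 2*(d1 - d2)*e1*e2) / (2*(d1 + d2)*e0)) :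
    e1'^2 + e2'^2 + e3'^2 < β := by
  subst hI1 hI2 hI3
  set S := e1 ^ 2 + e2 ^ 2 + e3 ^ 2
  have hS0 : 0 ≤ S := by positivity
  have he0sq : e0 ^ 2 = 1 - S := by rw [he0, Real.sq_sqrt] <;> linarith
  have he0pos : 0 < e0 := by rw [he0]; exact Real.sqrt_pos.2 (by linarith)
  have hy1 := abs_mul_le_of_eq_div hΔt.le (by positivity)
    (abs_sub_le_iff.2 ⟨by linarith, by linarith⟩) he0pos h1
  have hy2 := abs_mul_le_of_eq_div hΔt.le (by positivity)
    (abs_sub_le_iff.2 ⟨by linarith, by linarith⟩) he0pos h2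
  have hy3 := abs_mul_le_of_eq_div hΔt.le (by positivity)
    (abs_sub_le_iff.2 ⟨by linarith, by linarith⟩) he0pos h3
  have hprod : ∑ i, ![|e2 * e3|, |e1 * e3|, |e1 * e2|] i ^ 2 ≤ (S / √3) ^ 2 := by
    simpa [Fin.sum_univ_three, div_pow, mul_pow] using sq_mul_add_sq_mul_add_sq_mul_le e1 e2 e3
  have hsum := sum_sq_le_of_abs_le univ ![e0 * e1', e0 * e2', e0 * e3']
    ![Δt * |α1| / (2 * (d2 + d3)), Δt * |α2| / (2 * (d1 + d3)), Δt * |α3| / (2 * (d1 + d2))]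
    ![|e2 * e3|, |e1 * e3|, |e1 * e2|] (S / √3)
    (by intro i _; fin_cases i <;> assumption)
    (by intro i _; fin_cases i <;> simp <;> positivity) (by positivity) hprod
  simp only [Fin.sum_univ_three, Matrix.cons_val_zero, Matrix.cons_val_one, Matrix.cons_val]
    at hsum
  have hA : Δt * |α1| / (2 * (d2 + d3)) + Δt * |α2| / (2 * (d1 + d3))
      + Δt * |α3| / (2 * (d1 + d2))
      = Δt * (|α1| / (d2 + d3) + |α2| / (d1 + d3) + |α3| / (d1 + d2)) / 2 := by
    field_simp
  have hlt : e0 ^ 2 * (e1' ^ 2 + e2' ^ 2 + e3' ^ 2) < e0 ^ 2 * β :=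
    calc e0 ^ 2 * (e1' ^ 2 + e2' ^ 2 + e3' ^ 2)
        = (e0 * e1') ^ 2 + (e0 * e2') ^ 2 + (e0 * e3') ^ 2 := by ring
      _ ≤ _ := hsum
      _ < (√β * √(1 - S)) ^ 2 := by
        gcongr
        linarith [cfl_half_add_div_sqrt_three_lt (hS0.trans he.le) hβ.le he]
      _ = e0 ^ 2 * β := by
        rw [mul_pow, Real.sq_sqrt (hS0.trans he.le), Real.sq_sqrt (by linarith), he0sq, mul_comm]
  exact lt_of_mul_lt_mul_left hlt (sq_nonneg e0)

theorem stmt_9 (d1 d2 d3 : ℝ) (hd1 : 0 < d1) (hd2 : 0 < d2) (hd3 : 0 < d3)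
    (I1 I2 I3 : ℝ) (hI1 : I1 = d2 + d3) (hI2 : I2 = d1 + d3) (hI3 : I3 = d1 + d2)
    (α1 α2 α3 : ℝ) (β Δt : ℝ) (hβ0 : 0 < β) (hβ : β < 1/2) (hΔt : 0 < Δt)
    (hCFL : Δt * (|α1| / I1 + |α2| / I2 + |α3| / I3) ≤ 2 * Real.sqrt ((β - β^2)/3) - β)
    (e1 e2 e3 e0 : ℝ) (he : e1^2 + e2^2 + e3^2 < β)
    (he0 : e0 = Real.sqrt (1 - e1^2 - e2^2 - e3^2))
    (e1' e2' e3' : ℝ)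
    (h1 : e1' = (Δt * α1 - 2*(d2 - d3)*e2*e3) / (2*(d2 + d3)*e0))
    (h2 : e2' = (Δt * α2 - 2*(d3 - d1)*e1*e3) / (2*(d1 + d3)*e0))
    (h3 : e3' = (Δt * α3 - 2*(d1 - d2)*e1*e2) / (2*(d1 + d2)*e0)) :
    e1'^2 + e2'^2 + e3'^2 < β :=
  stmt_9_general d1 d2 d3 hd1 hd2 hd3 I1 I2 I3 hI1 hI2 hI3 α1 α2 α3 β Δt hβ hΔt hCFL e1 e2 e3 e0 he
    he0 e1' e2' e3' h1 h2 h3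
end

section
/- Let β ∈ (0, 1/2), B > 0, C > 0 with B² ≤ 3C and C ≤ B², and let Δt satisfy 0 < Δt ≤ (2√((β−β²)/3) − β)/B. Then Δt²·C + 2βΔt·B + 7β² − 4β < 0. -/
theorem stmt_12 (β B C Δt : ℝ) (hβ0 : 0 < β) (hβ : β < 1/2)
    (hB : 0 < B) (hC : 0 < C) (hBC : B^2 ≤ 3*C) (hCB : C ≤ B^2)
    (hpos : 0 < 2 * Real.sqrt ((β - β^2)/3) - β)
    (hΔt0 : 0 < Δt) (hΔt : Δt ≤ (2 * Real.sqrt ((β - β^2)/3) - β) / B) :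
    Δt^2 * C + 2*β*Δt*B + 7*β^2 - 4*β < 0 := by
  set s := Real.sqrt ((β - β^2)/3) with hs
  have hnn : 0 ≤ (β - β^2)/3 := by nlinarith
  have hs2 : s^2 = (β - β^2)/3 := Real.sq_sqrt hnn
  have hx : Δt * B ≤ 2*s - β := (le_div_iff₀ hB).mp hΔt
  nlinarith [sq_nonneg (Δt*B), mul_pos hΔt0 hB, sq_nonneg Δt, sq_nonneg s,
    mul_le_mul_of_nonneg_left hCB (sq_nonneg Δt)]
end
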